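/- Let $\mathcal{H}(\mathbb{Z})$ be the integer Heisenberg group and, for a positive integer $m$, let $H_m \le \mathcal{H}(\mathbb{Z})$ be the subgroup of matrices $A$ with $m \mid A_{12}$. Then the commutator subgroup of $H_m$ equals the set of upper unitriangular integer matrices $A$ with $A_{12} = 0$, $A_{23} = 0$, and $m \mid A_{13}$. -/

import Mathlib

open Matrix

/-- A `3 × 3` matrix is upper unitriangular if it has `1`s on the diagonal
and `0`s below the diagonal. -/
def IsUnitri {R : Type*} [CommRing R] (A : Matrix (Fin 3) (Fin 3) R) : Prop :=
  A 0 0 = 1 ∧ A 1 1 = 1 ∧ A 2 2 = 1 ∧ A 1 0 = 0 ∧ A 2 0 = 0 ∧ A 2 1 = 0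

/-- The Heisenberg group over `R`: upper unitriangular `3 × 3` matrices. -/
def Heisenberg (R : Type*) [CommRing R] : Type _ :=
  {A : Matrix (Fin 3) (Fin 3) R // IsUnitri A}

namespace Heisenberg

variable {R : Type*} [CommRing R]

theorem isUnitri_mul {A B : Matrix (Fin 3) (Fin 3) R} (hA : IsUnitri A)
    (hB : IsUnitri B) : IsUnitri (A * B) := by
  obtain ⟨a1, a2, a3, a4, a5, a6⟩ := hA
  obtain ⟨b1, b2, b3, b4, b5, b6⟩ := hB
  refine ⟨?_, ?_, ?_, ?_, ?_, ?_⟩ <;>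
    simp [Matrix.mul_apply, Fin.sum_univ_three, a1, a2, a3, a4, a5, a6,
      b1, b2, b3, b4, b5, b6]

instance : Group (Heisenberg R) where
  mul A B := ⟨A.1 * B.1, isUnitri_mul A.2 B.2⟩
  one := ⟨1, by refine ⟨?_, ?_, ?_, ?_, ?_, ?_⟩ <;> simp [Matrix.one_apply]⟩
  inv A := ⟨!![1, -(A.1 0 1), A.1 0 1 * A.1 1 2 - A.1 0 2;
               0, 1, -(A.1 1 2);
               0, 0, 1], by
    refine ⟨?_, ?_, ?_, ?_, ?_, ?_⟩ <;> simp [Matrix.vecHead, Matrix.vecTail]⟩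
  mul_assoc A B C := Subtype.ext (mul_assoc A.1 B.1 C.1)
  one_mul A := Subtype.ext (one_mul A.1)
  mul_one A := Subtype.ext (mul_one A.1)
  inv_mul_cancel A := by
    obtain ⟨a1, a2, a3, a4, a5, a6⟩ := A.2
    apply Subtype.ext
    show _ * A.1 = (1 : Matrix (Fin 3) (Fin 3) R)
    ext i j
    fin_cases i <;> fin_cases j <;>
      simp [Matrix.mul_apply, Fin.sum_univ_three, Matrix.one_apply,
        a1, a2, a3, a4, a5, a6] <;> ring

@[simp] theorem mul_val (A B : Heisenberg R) : (A * B).1 = A.1 * B.1 := rfl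

@[simp] theorem one_val : ((1 : Heisenberg R)).1 = (1 : Matrix (Fin 3) (Fin 3) R) := rfl

@[simp] theorem inv_val (A : Heisenberg R) :
    (A⁻¹).1 = !![1, -(A.1 0 1), A.1 0 1 * A.1 1 2 - A.1 0 2;
                 0, 1, -(A.1 1 2);
                 0, 0, 1] := rfl

theorem mul_apply_01 (A B : Heisenberg R) :
    (A * B).1 0 1 = A.1 0 1 + B.1 0 1 := by
  obtain ⟨a1, a2, a3, a4, a5, a6⟩ := A.2
  obtain ⟨b1, b2, b3, b4, b5, b6⟩ := B.2
  simp [Matrix.mul_apply, Fin.sum_univ_three, a1, a2, a3, a4, a5, a6,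
    b1, b2, b3, b4, b5, b6]
  ring

end Heisenberg


/-- The subgroup `H_m` of the integer Heisenberg group consisting of matrices
whose `(1,2)`-entry is divisible by `m`. -/
def Hsub (m : ℕ) : Subgroup (Heisenberg ℤ) where
  carrier := {A | (m : ℤ) ∣ A.1 0 1}
  mul_mem' := by
    intro A B hA hB
    simpa [Heisenberg.mul_apply_01] using dvd_add hA hB
  one_mem' := by simp [Matrix.one_apply]
  inv_mem' := by
    intro A hA
    simpa using hA.neg_right

instance Hsub_normal (m : ℕ) : (Hsub m).Normal := by
  constructor
  intro A hA g
  have : (g * A * g⁻¹).1 0 1 = A.1 0 1 := by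
    rw [Heisenberg.mul_apply_01, Heisenberg.mul_apply_01]
    simp
  show (m : ℤ) ∣ _
  rw [this]
  exact hA


/-! In coordinates `mk a b c = !![1, a, c; 0, 1, b; 0, 0, 1]` one has
`⁅mk a b c, mk a' b' c'⁆ = mk 0 0 (a * b' - b * a')`. For `m ∣ a` and `m ∣ a'` this lies in the
subgroup of central matrices whose corner is divisible by `m`, and conversely
`mk 0 0 (m * k) = ⁅mk m 0 0, mk 0 k 0⁆` is a single commutator of elements of `H_m`. -/

open scoped commutatorElement

namespace Heisenberg

variable {R : Type*} [CommRing R]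

def mk (a b c : R) : Heisenberg R :=
  ⟨!![1, a, c; 0, 1, b; 0, 0, 1], by refine ⟨?_, ?_, ?_, ?_, ?_, ?_⟩ <;> rfl⟩

@[simp] theorem mk_val (a b c : R) : (mk a b c).1 = !![1, a, c; 0, 1, b; 0, 0, 1] := rfl

theorem mk_inj {a b c a' b' c' : R} : mk a b c = mk a' b' c' ↔ a = a' ∧ b = b' ∧ c = c' := by
  refine ⟨fun h => ?_, by rintro ⟨rfl, rfl, rfl⟩; rfl⟩
  have h' := congrArg Subtype.val h
  simp only [mk_val] at h'
  exact ⟨congrFun (congrFun h' 0) 1, congrFun (congrFun h' 1) 2, congrFun (congrFun h' 0) 2⟩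

theorem eq_mk (A : Heisenberg R) : A = mk (A.1 0 1) (A.1 1 2) (A.1 0 2) := by
  obtain ⟨a1, a2, a3, a4, a5, a6⟩ := A.2
  apply Subtype.ext
  ext i j
  fin_cases i <;> fin_cases j <;> simp [a1, a2, a3, a4, a5, a6]

theorem mk_mul_mk (a b c a' b' c' : R) :
    mk a b c * mk a' b' c' = mk (a + a') (b + b') (c + a * b' + c') := by
  apply Subtype.ext
  ext i j
  fin_cases i <;> fin_cases j <;> simp [Matrix.mul_apply, Fin.sum_univ_three] <;> ring

theorem inv_mk (a b c : R) : (mk a b c)⁻¹ = mk (-a) (-b) (a * b - c) := rfl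

theorem commutatorElement_mk (a b c a' b' c' : R) :
    ⁅mk a b c, mk a' b' c'⁆ = mk 0 0 (a * b' - b * a') := by
  simp only [commutatorElement_def, inv_mk, mk_mul_mk, mk_inj]
  refine ⟨?_, ?_, ?_⟩ <;> ring

theorem commutatorElement_eq (g h : Heisenberg R) :
    ⁅g, h⁆ = mk 0 0 (g.1 0 1 * h.1 1 2 - g.1 1 2 * h.1 0 1) := by
  conv_lhs => rw [eq_mk g, eq_mk h]
  exact commutatorElement_mk ..

def centerDvd (m : ℕ) : Subgroup (Heisenberg ℤ) where
  carrier := {A | A.1 0 1 = 0 ∧ A.1 1 2 = 0 ∧ (m : ℤ) ∣ A.1 0 2}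
  mul_mem' := by
    rintro A B ⟨hA01, hA12, hA02⟩ ⟨hB01, hB12, hB02⟩
    rw [eq_mk A, eq_mk B, hA01, hA12, hB01, hB12, mk_mul_mk]
    simpa using dvd_add hA02 hB02
  one_mem' := by simp
  inv_mem' := by
    rintro A ⟨hA01, hA12, hA02⟩
    rw [eq_mk A, hA01, hA12, inv_mk]
    simpa using hA02

theorem mk_mem_centerDvd {m : ℕ} {a b c : ℤ} :
    mk a b c ∈ centerDvd m ↔ a = 0 ∧ b = 0 ∧ (m : ℤ) ∣ c :=
  Iff.rfl

end Heisenberg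

open Heisenberg

theorem commutator_Hsub (m : ℕ) : ⁅Hsub m, Hsub m⁆ = centerDvd m := by
  refine le_antisymm (Subgroup.commutator_le.mpr fun g (hg : (m : ℤ) ∣ _) h (hh : (m : ℤ) ∣ _) => ?_)
    fun A ⟨hA01, hA12, ⟨k, hA02⟩⟩ => ?_
  · rw [commutatorElement_eq, mk_mem_centerDvd]
    exact ⟨rfl, rfl, dvd_sub (hg.mul_right _) (hh.mul_left _)⟩
  · have hA : A = ⁅mk (m : ℤ) 0 0, mk 0 k 0⁆ := by
      rw [commutatorElement_mk, eq_mk A, hA01, hA12, hA02]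
      simp
    rw [hA]
    exact Subgroup.commutator_mem_commutator (show (m : ℤ) ∣ m from dvd_rfl)
      (show (m : ℤ) ∣ 0 from dvd_zero _)

theorem stmt_6_general (m : ℕ) (A : Hsub m) :
    A ∈ commutator ↥(Hsub m) ↔
      (A : Heisenberg ℤ).1 0 1 = 0 ∧ (A : Heisenberg ℤ).1 1 2 = 0 ∧
        (m : ℤ) ∣ (A : Heisenberg ℤ).1 0 2 := by
  rw [← Subgroup.mem_map_iff_mem (Hsub m).subtype_injective, Subgroup.map_subtype_commutator,
    commutator_Hsub]
  rfl

/-- The commutator subgroup of `H_m` consists exactly of the unitriangular integer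
matrices with vanishing `(1,2)`- and `(2,3)`-entries and `(1,3)`-entry divisible by `m`. -/
theorem stmt_6 (m : ℕ) (hm : 0 < m) (A : Hsub m) :
    A ∈ commutator ↥(Hsub m) ↔
      (A : Heisenberg ℤ).1 0 1 = 0 ∧ (A : Heisenberg ℤ).1 1 2 = 0 ∧
        (m : ℤ) ∣ (A : Heisenberg ℤ).1 0 2 :=
  stmt_6_general m A
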